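/- arXiv:1609.01261 — 5 statements merged into one kernel-verified Lean document; each statement's English description precedes it below -/
import Mathlib

section
/- Let D₁ ⊇ D₂ ⊇ D₃ ⊇ ⋯ be a nested sequence of open Euclidean discs in the plane, no two of which are equal. If there exists m such that for all n ≥ m the discs D_n and D_{n+2} are tangent (i.e., their boundary circles meet), then all the discs D_n for n ≥ m share a common boundary point. -/
open Metric

/-- From `ball c' r' ⊆ ball c r` (with positive radii) deduce the quantitative
containment `dist c' c + r' ≤ r`. -/
lemma ball_sub_quant (c c' : ℂ) (r r' : ℝ) (hr : 0 < r) (hr' : 0 < r')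
    (h : ball c' r' ⊆ ball c r) : dist c' c + r' ≤ r := by
  have hcb : closedBall c' r' ⊆ closedBall c r := by
    rw [← closure_ball c' hr'.ne', ← closure_ball c hr.ne']
    exact closure_mono h
  by_cases hcc : c' = c
  · subst hcc
    have h1 : c' + r' ∈ closedBall c' r' := by
      rw [mem_closedBall, dist_eq_norm]
      simp only [add_sub_cancel_left]
      rw [Complex.norm_real, Real.norm_eq_abs, abs_of_nonneg hr'.le]
    have h2 := hcb h1
    rw [mem_closedBall, dist_eq_norm] at h2
    simp only [add_sub_cancel_left] at h2
    rw [Complex.norm_real, Real.norm_eq_abs, abs_of_nonneg hr'.le] at h2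
    simpa using h2
  · set d : ℝ := ‖c' - c‖ with hd
    have hd0 : 0 < d := by
      rw [hd, norm_pos_iff]
      exact sub_ne_zero.mpr hcc
    set z : ℂ := c' + (r' / d : ℝ) * (c' - c) with hz
    have hz1 : z ∈ closedBall c' r' := by
      rw [mem_closedBall, dist_eq_norm, hz]
      simp only [add_sub_cancel_left]
      rw [norm_mul, Complex.norm_real, Real.norm_eq_abs,
        abs_of_nonneg (div_nonneg hr'.le hd0.le), ← hd, div_mul_cancel₀ _ hd0.ne']
    have hz2 : dist z c = d + r' := by
      rw [dist_eq_norm, hz]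
      have he : c' + (r' / d : ℝ) * (c' - c) - c = (1 + (r' / d : ℝ)) * (c' - c) := by
        ring
      rw [he, norm_mul, ← hd]
      have h1 : ‖(1 : ℂ) + (r' / d : ℝ)‖ = 1 + r' / d := by
        have he2 : (1 : ℂ) + (r' / d : ℝ) = ((1 + r' / d : ℝ) : ℂ) := by push_cast; ring
        rw [he2, Complex.norm_real, Real.norm_eq_abs, abs_of_nonneg]
        positivity
      rw [h1]
      field_simp
    have h3 := hcb hz1
    rw [mem_closedBall, hz2] at h3
    rw [dist_eq_norm, ← hd]
    linarith

/-- Any point on both circles of an internally tangent pair is the canonical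
tangency point. -/
lemma tangent_point_eq (c c' : ℂ) (r r' : ℝ) (hr' : 0 < r')
    (hsub : dist c' c + r' ≤ r) (hcc : c' ≠ c)
    {z : ℂ} (hz : z ∈ sphere c r ∩ sphere c' r') :
    z = c' + ((r' / ‖c' - c‖ : ℝ) : ℂ) * (c' - c) := by
  have h1 : dist z c = r := hz.1
  have h2 : dist z c' = r' := hz.2
  have hd0 : (0 : ℝ) < ‖c' - c‖ := by
    rw [norm_pos_iff]; exact sub_ne_zero.mpr hcc
  have hdcc : dist c' c = ‖c' - c‖ := dist_eq_norm _ _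
  have htri : dist z c ≤ dist z c' + dist c' c := dist_triangle _ _ _
  have heq : ‖(z - c') + (c' - c)‖ = ‖z - c'‖ + ‖c' - c‖ := by
    have hl : (z - c') + (c' - c) = z - c := by ring
    rw [hl, ← dist_eq_norm, ← dist_eq_norm, h1, ← hdcc, h2]
    linarith
  have hray : SameRay ℝ (z - c') (c' - c) := sameRay_iff_norm_add.mpr heq
  obtain ⟨a, ha0, haeq⟩ := hray.exists_nonneg_right (sub_ne_zero.mpr hcc)
  have hnorm : r' = a * ‖c' - c‖ := by
    rw [← h2, dist_eq_norm, haeq, norm_smul, Real.norm_eq_abs, abs_of_nonneg ha0]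
  have ha : a = r' / ‖c' - c‖ := by
    rw [hnorm, mul_div_cancel_right₀ _ hd0.ne']
  have : z = c' + a • (c' - c) := by
    rw [← haeq]; ring
  rw [this, ha, Complex.real_smul]

/-- If `p` is on the circles of discs `n` and `n+2`, it is also on circle `n+1`. -/
lemma middle_sphere (c : ℕ → ℂ) (r : ℕ → ℝ) (hr : ∀ n, 0 < r n)
    (hnest : ∀ n, ball (c (n + 1)) (r (n + 1)) ⊆ ball (c n) (r n))
    (n : ℕ) {p : ℂ} (h0 : p ∈ sphere (c n) (r n))
    (h2 : p ∈ sphere (c (n + 2)) (r (n + 2))) :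
    p ∈ sphere (c (n + 1)) (r (n + 1)) := by
  have hq : dist (c (n + 2)) (c (n + 1)) + r (n + 2) ≤ r (n + 1) :=
    ball_sub_quant _ _ _ _ (hr _) (hr _) (hnest (n + 1))
  rw [mem_sphere] at h0 h2 ⊢
  have hle : dist p (c (n + 1)) ≤ r (n + 1) := by
    calc dist p (c (n + 1)) ≤ dist p (c (n + 2)) + dist (c (n + 2)) (c (n + 1)) :=
          dist_triangle _ _ _
      _ ≤ r (n + 1) := by rw [h2]; linarith
  have hge : r (n + 1) ≤ dist p (c (n + 1)) := by
    by_contra hlt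
    push_neg at hlt
    have : p ∈ ball (c n) (r n) := hnest n (by rwa [mem_ball])
    rw [mem_ball, h0] at this
    exact lt_irrefl _ this
  linarith

/-- If a nested sequence of pairwise distinct open discs is such that
`D n` and `D (n+2)` are tangent for all `n ≥ m`, then all discs `D n`, `n ≥ m`,
share a common boundary point. -/
theorem stmt1 (c : ℕ → ℂ) (r : ℕ → ℝ) (hr : ∀ n, 0 < r n)
    (hnest : ∀ n, Metric.ball (c (n + 1)) (r (n + 1)) ⊆ Metric.ball (c n) (r n))
    (hdist : ∀ m n, m ≠ n → Metric.ball (c m) (r m) ≠ Metric.ball (c n) (r n))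
    (m : ℕ)
    (htan : ∀ n ≥ m,
      (Metric.sphere (c n) (r n) ∩ Metric.sphere (c (n + 2)) (r (n + 2))).Nonempty) :
    ∃ p : ℂ, ∀ n ≥ m, p ∈ Metric.sphere (c n) (r n) := by
  -- quantitative nesting between consecutive discs
  have hq : ∀ n, dist (c (n + 1)) (c n) + r (n + 1) ≤ r n := fun n =>
    ball_sub_quant _ _ _ _ (hr _) (hr _) (hnest n)
  -- consecutive centers are distinct whenever a point lies on both spheres
  have hcc : ∀ n (z : ℂ), z ∈ sphere (c n) (r n) → z ∈ sphere (c (n + 1)) (r (n + 1)) →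
      c (n + 1) ≠ c n := by
    intro n z hz1 hz2 h
    rw [mem_sphere] at hz1 hz2
    have hrr : r n = r (n + 1) := by rw [← hz1, ← hz2, h]
    exact hdist n (n + 1) (by omega) (by rw [h, hrr])
  -- uniqueness of a point on consecutive spheres
  have huniq : ∀ n (x y : ℂ),
      x ∈ sphere (c n) (r n) → x ∈ sphere (c (n + 1)) (r (n + 1)) →
      y ∈ sphere (c n) (r n) → y ∈ sphere (c (n + 1)) (r (n + 1)) → x = y := by
    intro n x y hx1 hx2 hy1 hy2
    have hne := hcc n x hx1 hx2
    rw [tangent_point_eq (c n) (c (n + 1)) (r n) (r (n + 1)) (hr _) (hq n) hne ⟨hx1, hx2⟩,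
      tangent_point_eq (c n) (c (n + 1)) (r n) (r (n + 1)) (hr _) (hq n) hne ⟨hy1, hy2⟩]
  obtain ⟨p, hp0, hp2⟩ := htan m le_rfl
  refine ⟨p, ?_⟩
  have key : ∀ k, p ∈ sphere (c (m + k)) (r (m + k)) ∧
      p ∈ sphere (c (m + k + 1)) (r (m + k + 1)) := by
    intro k
    induction k with
    | zero =>
      exact ⟨hp0, middle_sphere c r hr hnest m hp0 hp2⟩
    | succ k ih =>
      obtain ⟨ih1, ih2⟩ := ih
      obtain ⟨q, hq0, hq2⟩ := htan (m + k) (Nat.le_add_right m k)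
      have hq1 : q ∈ sphere (c (m + k + 1)) (r (m + k + 1)) :=
        middle_sphere c r hr hnest (m + k) hq0 hq2
      have hpq : p = q := huniq (m + k) p q ih1 ih2 hq0 hq1
      have hm2 : p ∈ sphere (c (m + k + 2)) (r (m + k + 2)) := hpq ▸ hq2
      exact ⟨ih2, hm2⟩
  intro n hn
  have := (key (n - m)).1
  rwa [Nat.add_sub_cancel' hn] at this
end

section
/- Let (h_n) be a sequence of affine maps h_n(z) = a_n z + b_n with a_n > 0, Re(b_n) > 0, drawn from a finite set of such maps, and let H_n = h₁⋯h_n. Then ⋂_n H_n(K̄) is a half-plane (limit-disc type) if and only if Σ_{n=1}^∞ a₁ a₂ ⋯ a_n < ∞. -/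
/-- The composition sequence `H n = h 0 ∘ h 1 ∘ ⋯ ∘ h n`. -/
noncomputable def compSeq (h : ℕ → ℂ → ℂ) : ℕ → ℂ → ℂ
  | 0 => h 0
  | n + 1 => fun z => compSeq h n (h (n + 1) z)

/-- A function `ℕ → ℝ` with finite range and positive values has a positive lower bound. -/
lemma exists_pos_lb (f : ℕ → ℝ) (hf : (Set.range f).Finite) (hpos : ∀ n, 0 < f n) :
    ∃ m, 0 < m ∧ ∀ n, m ≤ f n := by
  have hne : (Set.range f).Nonempty := ⟨f 0, 0, rfl⟩
  obtain ⟨n0, hn0⟩ := hne.csInf_mem hf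
  exact ⟨sInf (Set.range f), hn0 ▸ hpos n0, fun n => csInf_le hf.bddBelow ⟨n, rfl⟩⟩

/-- A function `ℕ → ℝ` with finite range has an upper bound. -/
lemma exists_ub (f : ℕ → ℝ) (hf : (Set.range f).Finite) : ∃ M, ∀ n, f n ≤ M := by
  obtain ⟨M, hM⟩ := hf.bddAbove
  exact ⟨M, fun n => hM ⟨n, rfl⟩⟩

/-- Image of the closed right half-plane under `z ↦ c z + d`, `c > 0` real. -/
lemma image_halfplane (c : ℝ) (hc : 0 < c) (d : ℂ) :
    (fun z : ℂ => (c : ℂ) * z + d) '' {z | 0 ≤ z.re} = {w | d.re ≤ w.re} := by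
  ext w
  constructor
  · rintro ⟨z, hz, rfl⟩
    simp only [Set.mem_setOf_eq] at hz ⊢
    simp only [Complex.add_re, Complex.mul_re, Complex.ofReal_re, Complex.ofReal_im]
    nlinarith
  · intro hw
    refine ⟨(w - d) / (c : ℂ), ?_, ?_⟩
    · simp only [Set.mem_setOf_eq, Complex.div_ofReal_re, Complex.sub_re]
      have : 0 ≤ w.re - d.re := by linarith [Set.mem_setOf_eq ▸ hw]
      positivity
    · have hc' : (c : ℂ) ≠ 0 := by exact_mod_cast hc.ne'
      field_simp
      ring

/-- For a finitely generated composition sequence of maps `h n z = aₙ z + bₙ`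
with `aₙ > 0`, `Re bₙ > 0`, the intersection `⋂ H n (closure K)` is a (closed) half-plane
iff `Σ a₀ a₁ ⋯ aₙ < ∞`. -/
theorem stmt6 (a : ℕ → ℝ) (b : ℕ → ℂ) (ha : ∀ n, 0 < a n) (hb : ∀ n, 0 < (b n).re)
    (hfin : (Set.range fun n => (a n, b n)).Finite)
    (h : ℕ → ℂ → ℂ) (hh : ∀ n z, h n z = (a n : ℂ) * z + b n) :
    (∃ c : ℝ, (⋂ n, compSeq h n '' {z : ℂ | 0 ≤ z.re}) = {z : ℂ | c ≤ z.re}) ↔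
      Summable (fun n => ∏ k ∈ Finset.range (n + 1), a k) := by
  -- bounds from finite generation
  have hfa : (Set.range a).Finite := by
    have : Set.range a ⊆ Prod.fst '' Set.range (fun n => (a n, b n)) := by
      rintro x ⟨n, rfl⟩; exact ⟨(a n, b n), ⟨n, rfl⟩, rfl⟩
    exact (hfin.image Prod.fst).subset this
  have hfb : (Set.range fun n => (b n).re).Finite := by
    have : Set.range (fun n => (b n).re) ⊆ (fun p : ℝ × ℂ => p.2.re) ''
        Set.range (fun n => (a n, b n)) := by
      rintro x ⟨n, rfl⟩; exact ⟨(a n, b n), ⟨n, rfl⟩, rfl⟩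
    exact (hfin.image _).subset this
  obtain ⟨A, hA⟩ := exists_ub a hfa
  obtain ⟨α, hα0, hα⟩ := exists_pos_lb a hfa ha
  obtain ⟨M, hM⟩ := exists_ub _ hfb
  obtain ⟨m, hm0, hm⟩ := exists_pos_lb _ hfb hb
  have hM0 : 0 < M := lt_of_lt_of_le (hb 0) (hM 0)
  have hA0 : 0 < A := lt_of_lt_of_le (ha 0) (hA 0)
  -- products and partial boundaries
  have hP : ∀ n, 0 < ∏ j ∈ Finset.range n, a j :=
    fun n => Finset.prod_pos fun i _ => ha i
  set t : ℕ → ℝ := fun k => (∏ j ∈ Finset.range k, a j) * (b k).re with ht_def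
  have htpos : ∀ k, 0 < t k := fun k => mul_pos (hP k) (hb k)
  set S : ℕ → ℝ := fun n => ∑ k ∈ Finset.range (n + 1), t k with hS_def
  -- form of compSeq
  have hform : ∀ n z, compSeq h n z =
      ((∏ k ∈ Finset.range (n + 1), a k : ℝ) : ℂ) * z +
        ∑ k ∈ Finset.range (n + 1), ((∏ j ∈ Finset.range k, a j : ℝ) : ℂ) * b k := by
    intro n
    induction n with
    | zero =>
      intro z
      show h 0 z = _
      rw [hh]
      simp
    | succ n ih =>
      intro z
      show compSeq h n (h (n + 1) z) = _
      rw [ih, hh]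
      have e1 : ((∏ k ∈ Finset.range (n + 1 + 1), a k : ℝ) : ℂ) =
          ((∏ k ∈ Finset.range (n + 1), a k : ℝ) : ℂ) * (a (n + 1) : ℂ) := by
        rw [Finset.prod_range_succ]; push_cast; ring
      have e2 : ∑ k ∈ Finset.range (n + 1 + 1), ((∏ j ∈ Finset.range k, a j : ℝ) : ℂ) * b k =
          (∑ k ∈ Finset.range (n + 1), ((∏ j ∈ Finset.range k, a j : ℝ) : ℂ) * b k) +
            ((∏ j ∈ Finset.range (n + 1), a j : ℝ) : ℂ) * b (n + 1) :=
        Finset.sum_range_succ _ _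
      rw [e1, e2]
      ring
  -- image description
  have himg : ∀ n, compSeq h n '' {z : ℂ | 0 ≤ z.re} = {w : ℂ | S n ≤ w.re} := by
    intro n
    have hfun : compSeq h n = fun z =>
        ((∏ k ∈ Finset.range (n + 1), a k : ℝ) : ℂ) * z +
          ∑ k ∈ Finset.range (n + 1), ((∏ j ∈ Finset.range k, a j : ℝ) : ℂ) * b k :=
      funext (hform n)
    rw [hfun, image_halfplane _ (hP (n + 1)) _]
    have hre : (∑ k ∈ Finset.range (n + 1),
        ((∏ j ∈ Finset.range k, a j : ℝ) : ℂ) * b k).re = S n := by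
      rw [Complex.re_sum]
      exact Finset.sum_congr rfl fun k _ => Complex.re_ofReal_mul _ _
    rw [hre]
  -- rewrite the intersection
  have hiInter : (⋂ n, compSeq h n '' {z : ℂ | 0 ≤ z.re}) = ⋂ n, {w : ℂ | S n ≤ w.re} := by
    exact Set.iInter_congr himg
  rw [hiInter]
  constructor
  · rintro ⟨c, hc⟩
    -- the point c lies in the intersection
    have hcmem : (c : ℂ) ∈ ⋂ n, {w : ℂ | S n ≤ w.re} := by
      rw [hc]; simp
    have hSc : ∀ n, S n ≤ c := by
      intro n
      have := Set.mem_iInter.1 hcmem n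
      simpa using this
    -- t is summable
    have ht : Summable t := by
      apply summable_of_sum_range_le (c := c) (fun k => (htpos k).le)
      intro n
      calc ∑ i ∈ Finset.range n, t i
          ≤ ∑ i ∈ Finset.range (n + 1), t i :=
            Finset.sum_le_sum_of_subset_of_nonneg
              (Finset.range_subset_range.2 (Nat.le_succ n))
              (fun i _ _ => (htpos i).le)
        _ ≤ c := hSc n
    -- comparison
    apply Summable.of_nonneg_of_le (fun n => (hP (n + 1)).le)
      (f := fun n => (A / m) * t n)
    · intro n
      rw [Finset.prod_range_succ]
      have h1 : ∏ j ∈ Finset.range n, a j ≤ t n / m := by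
        rw [le_div_iff₀ hm0]
        exact mul_le_mul_of_nonneg_left (hm n) (hP n).le
      calc (∏ j ∈ Finset.range n, a j) * a n
          ≤ (t n / m) * A := by
            exact mul_le_mul h1 (hA n) (ha n).le (div_nonneg (htpos n).le hm0.le)
        _ = (A / m) * t n := by ring
    · exact ht.mul_left _
  · intro hsum
    -- t summable by comparison
    have ht : Summable t := by
      apply Summable.of_nonneg_of_le (fun n => (htpos n).le)
        (f := fun n => (M / α) * ∏ k ∈ Finset.range (n + 1), a k)
      · intro n
        rw [Finset.prod_range_succ, ht_def]
        have h1 : (b n).re ≤ (M / α) * a n := by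
          rw [div_mul_eq_mul_div, le_div_iff₀ hα0]
          calc (b n).re * α ≤ M * α := by
                exact mul_le_mul_of_nonneg_right (hM n) hα0.le
            _ ≤ M * a n := by
                exact mul_le_mul_of_nonneg_left (hα n) hM0.le
        calc (∏ j ∈ Finset.range n, a j) * (b n).re
            ≤ (∏ j ∈ Finset.range n, a j) * ((M / α) * a n) :=
              mul_le_mul_of_nonneg_left h1 (hP n).le
          _ = (M / α) * ((∏ j ∈ Finset.range n, a j) * a n) := by ring
      · exact hsum.mul_left _
    -- S is bounded above
    have hSb : ∀ n, S n ≤ ∑' k, t k := by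
      intro n
      exact Summable.sum_le_tsum _ (fun k _ => (htpos k).le) ht
    have hbdd : BddAbove (Set.range S) := ⟨∑' k, t k, by rintro x ⟨n, rfl⟩; exact hSb n⟩
    refine ⟨⨆ n, S n, ?_⟩
    ext w
    simp only [Set.mem_iInter, Set.mem_setOf_eq]
    constructor
    · intro hw
      exact ciSup_le hw
    · intro hw n
      exact le_trans (le_ciSup hbdd n) hw
end

section
/- Let U and V be Euclidean discs in ℂ with centres u, v and radii r, s respectively, with V ⊆ U and U ≠ V. Let Π(V) denote the hyperbolic plane {z ∈ ℍ³ : |z − v| = s} in upper half-space ℍ³, similarly Π(U), and let z ∈ Π(U) with height h(z) (third coordinate). If r/s < min{2, 1 + (1/8)·sinh ρ(z, Π(V))}, where ρ is the hyperbolic metric on ℍ³, then h(z) < s/2. -/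
/-- A point of upper half-space `ℍ³`, with plane part `p ∈ ℂ` and height `t`. -/
structure H3 where
  p : ℂ
  t : ℝ

/-- Euclidean distance from `z ∈ ℍ³` to a point `v` of the ideal boundary `ℂ`. -/
noncomputable def edistPt (z : H3) (v : ℂ) : ℝ :=
  Real.sqrt (‖z.p - v‖ ^ 2 + z.t ^ 2)

/-- `sinh` of the hyperbolic distance from `z ∈ ℍ³` to the hyperbolic plane
`Π(V) = {w : |w - v| = s}`, by the standard formula
`sinh ρ(z, Π(V)) = (|z-v|² - s²)/(2 h(z) s)`. -/
noncomputable def sinhRhoPlane (z : H3) (v : ℂ) (s : ℝ) : ℝ :=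
  (edistPt z v ^ 2 - s ^ 2) / (2 * z.t * s)


lemma ball_subset_dist_add (u v : ℂ) (r s : ℝ) (hs : 0 < s)
    (hsub : Metric.ball v s ⊆ Metric.ball u r) : dist v u + s ≤ r := by
  refine le_of_forall_pos_lt_add fun ε hε => ?_
  rcases le_or_gt s ε with hse | hse
  · have hv : v ∈ Metric.ball u r := hsub (Metric.mem_ball_self hs)
    rw [Metric.mem_ball] at hv
    linarith
  · have hc : (0:ℝ) < s - ε / 2 := by linarith
    by_cases h : v = u
    · subst h
      have hw : (v + ((s - ε / 2 : ℝ) : ℂ)) ∈ Metric.ball v s := by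
        rw [Metric.mem_ball, dist_eq_norm]
        have h2 : v + ((s - ε / 2 : ℝ) : ℂ) - v = ((s - ε / 2 : ℝ) : ℂ) := by ring
        rw [h2, Complex.norm_real, Real.norm_eq_abs, abs_of_pos hc]
        linarith
      have h1 := hsub hw
      rw [Metric.mem_ball, dist_eq_norm] at h1
      have h2 : v + ((s - ε / 2 : ℝ) : ℂ) - v = ((s - ε / 2 : ℝ) : ℂ) := by ring
      rw [h2, Complex.norm_real, Real.norm_eq_abs, abs_of_pos hc] at h1
      simp only [dist_self]
      linarith
    · have hn0 : 0 < ‖v - u‖ := norm_pos_iff.mpr (sub_ne_zero.mpr h)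
      have hw : (v + (((s - ε / 2) / ‖v - u‖ : ℝ) : ℂ) * (v - u)) ∈ Metric.ball v s := by
        rw [Metric.mem_ball, dist_eq_norm]
        have h3 : v + (((s - ε / 2) / ‖v - u‖ : ℝ) : ℂ) * (v - u) - v
            = (((s - ε / 2) / ‖v - u‖ : ℝ) : ℂ) * (v - u) := by ring
        rw [h3, norm_mul, Complex.norm_real, Real.norm_eq_abs,
          abs_of_pos (by positivity), div_mul_cancel₀ _ (ne_of_gt hn0)]
        linarith
      have hwu := hsub hw
      rw [Metric.mem_ball, dist_eq_norm] at hwu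
      have h4 : v + (((s - ε / 2) / ‖v - u‖ : ℝ) : ℂ) * (v - u) - u
          = ((1 + (s - ε / 2) / ‖v - u‖ : ℝ) : ℂ) * (v - u) := by
        push_cast
        ring
      rw [h4, norm_mul, Complex.norm_real, Real.norm_eq_abs,
        abs_of_pos (by positivity : (0:ℝ) < 1 + (s - ε / 2) / ‖v - u‖)] at hwu
      have hne' : ‖v - u‖ ≠ 0 := by
        exact ne_of_gt hn0
      have h5 : (1 + (s - ε / 2) / ‖v - u‖) * ‖v - u‖ = ‖v - u‖ + (s - ε / 2) := by
        field_simp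
      rw [h5] at hwu
      rw [dist_eq_norm]
      linarith

/-- If `V ⊆ U` are distinct Euclidean discs of radii `s < r`, `z ∈ Π(U)`,
and `r/s < min {2, 1 + (1/8) sinh ρ(z, Π(V))}`, then `h(z) < s/2`. -/
theorem stmt11 (u v : ℂ) (r s : ℝ) (hr : 0 < r) (hs : 0 < s)
    (hsub : Metric.ball v s ⊆ Metric.ball u r)
    (hne : Metric.ball v s ≠ Metric.ball u r)
    (z : H3) (hzt : 0 < z.t) (hzU : edistPt z u = r)
    (hratio : r / s < min 2 (1 + (1 / 8) * sinhRhoPlane z v s)) :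
    z.t < s / 2 := by
  have hvu : dist v u + s ≤ r := ball_subset_dist_add u v r s hs hsub
  have hdnn : (0:ℝ) ≤ dist v u := dist_nonneg
  have hsr : s < r := by
    rcases lt_or_eq_of_le (show s ≤ r by linarith) with h | h
    · exact h
    · exfalso
      apply hne
      have h0 : dist v u = 0 := le_antisymm (by linarith) hdnn
      rw [dist_eq_zero] at h0
      rw [h0, h]
  set a := ‖z.p - u‖ with ha
  set d := ‖z.p - v‖ with hd
  have hanr : 0 ≤ a := norm_nonneg _
  have hdnr : 0 ≤ d := norm_nonneg _
  have ha2 : a ^ 2 + z.t ^ 2 = r ^ 2 := by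
    have h1 := Real.sq_sqrt (show (0:ℝ) ≤ a ^ 2 + z.t ^ 2 by positivity)
    have h2 : Real.sqrt (a ^ 2 + z.t ^ 2) = r := hzU
    rw [h2] at h1
    linarith
  have har : a ≤ r := by nlinarith [sq_nonneg z.t]
  have hdle : d ≤ a + (r - s) := by
    have h1 : d ≤ a + ‖u - v‖ := by
      calc d = ‖(z.p - u) + (u - v)‖ := by rw [hd]; ring_nf
        _ ≤ a + ‖u - v‖ := norm_add_le _ _
    have h2 : ‖u - v‖ ≤ r - s := by
      have h3 : dist u v = ‖u - v‖ := Complex.dist_eq u v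
      have h4 : dist u v = dist v u := dist_comm u v
      linarith
    linarith
  have hE2 : edistPt z v ^ 2 = d ^ 2 + z.t ^ 2 := by
    unfold edistPt
    exact Real.sq_sqrt (by positivity)
  have hA : r / s < 2 := lt_of_lt_of_le hratio (min_le_left _ _)
  have hB : r / s < 1 + (1 / 8) * sinhRhoPlane z v s :=
    lt_of_lt_of_le hratio (min_le_right _ _)
  have hr2s : r < 2 * s := by
    rw [div_lt_iff₀ hs] at hA; linarith
  by_contra hcon
  push_neg at hcon
  -- hcon : s / 2 ≤ z.t
  have hts : (0:ℝ) < 2 * z.t * s := by positivity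
  set S := sinhRhoPlane z v s with hSdef
  have hSN : S * (2 * z.t * s) = d ^ 2 + z.t ^ 2 - s ^ 2 := by
    rw [hSdef]
    unfold sinhRhoPlane
    rw [hE2]
    field_simp
  have hB' : r < (1 + (1 / 8) * S) * s := by
    rw [div_lt_iff₀ hs] at hB; exact hB
  -- from hB': 8 (r - s) < S * s, multiply by 2 z.t:
  have hkey : 16 * z.t * (r - s) < d ^ 2 + z.t ^ 2 - s ^ 2 := by
    nlinarith [mul_pos hzt hs, hB', hSN, hzt]
  -- upper bound on numerator
  have hub : d ^ 2 + z.t ^ 2 - s ^ 2 ≤ 4 * r * (r - s) := by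
    nlinarith [mul_le_mul hdle hdle hdnr (by linarith : (0:ℝ) ≤ a + (r - s))]
  nlinarith [mul_le_mul hcon hcon (by positivity : (0:ℝ) ≤ s / 2) (le_of_lt hzt),
    mul_pos (show (0:ℝ) < r - s by linarith) hs]
end

section
/- With the notation and hypotheses of the preceding disc lemma (V ⊆ U, r/s < min{2, 1 + (1/8) sinh ρ(z, Π(V))} for z ∈ Π(U)), let w be the point of Π(V) with h(w) = h(z) that is closest in Euclidean distance to z. Then |z − w| < 3(r − s). -/
/-- Euclidean distance between two points of `ℍ³`. -/
noncomputable def dist3 (z w : H3) : ℝ :=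
  Real.sqrt (‖z.p - w.p‖ ^ 2 + (z.t - w.t) ^ 2)

/-- Auxiliary: ball containment gives `dist v u + s ≤ r`. -/
lemma ball_subset_dist (u v : ℂ) (r s : ℝ) (hs : 0 < s)
    (h : Metric.ball v s ⊆ Metric.ball u r) : dist v u + s ≤ r := by
  by_contra hlt
  push_neg at hlt
  set ε : ℝ := min ((dist v u + s - r) / 2) (s / 2) with hε
  have hε0 : 0 < ε := lt_min (by linarith) (by linarith)
  have hε1 : ε ≤ (dist v u + s - r) / 2 := min_le_left _ _
  have hε2 : ε ≤ s / 2 := min_le_right _ _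
  set e : ℂ := if v = u then (1 : ℂ) else (v - u) / ((‖v - u‖ : ℝ) : ℂ) with he
  set p : ℂ := v + ((s - ε : ℝ) : ℂ) * e with hp
  have habs : ‖(v - u) + ((s - ε : ℝ) : ℂ) * e‖ = dist v u + (s - ε) := by
    by_cases hvu : v = u
    · rw [he, if_pos hvu, mul_one, hvu, sub_self, zero_add, dist_self, zero_add,
        Complex.norm_real, Real.norm_eq_abs, abs_of_nonneg (by linarith : (0:ℝ) ≤ s - ε)]
    · have hne0 : v - u ≠ 0 := sub_ne_zero.mpr hvu
      have habs0 : (0:ℝ) < ‖v - u‖ := by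
        exact norm_pos_iff.mpr hne0
      have hcast : ((‖v - u‖ : ℝ) : ℂ) ≠ 0 := by
        exact_mod_cast ne_of_gt habs0
      rw [he, if_neg hvu]
      have : (v - u) + ((s - ε : ℝ) : ℂ) * ((v - u) / ((‖v - u‖ : ℝ) : ℂ))
          = (v - u) * (1 + ((s - ε : ℝ) : ℂ) / ((‖v - u‖ : ℝ) : ℂ)) := by
        field_simp
      rw [this, norm_mul]
      have h2 : ‖1 + ((s - ε : ℝ) : ℂ) / ((‖v - u‖ : ℝ) : ℂ)‖
          = 1 + (s - ε) / ‖v - u‖ := by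
        have : (1 + ((s - ε : ℝ) : ℂ) / ((‖v - u‖ : ℝ) : ℂ))
            = (((1 + (s - ε) / ‖v - u‖ : ℝ)) : ℂ) := by
          push_cast
          ring
        rw [this, Complex.norm_real, Real.norm_eq_abs]
        have : (0:ℝ) ≤ 1 + (s - ε) / ‖v - u‖ := by
          have : (0:ℝ) ≤ (s - ε) / ‖v - u‖ :=
            div_nonneg (by linarith) habs0.le
          linarith
        exact abs_of_nonneg this
      rw [h2, Complex.dist_eq]
      field_simp
  have hpmem : p ∈ Metric.ball v s := by
    have he1 : ‖e‖ = 1 := by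
      by_cases hvu : v = u
      · simp [he, hvu]
      · have hne0 : v - u ≠ 0 := sub_ne_zero.mpr hvu
        have habs0 : (0:ℝ) < ‖v - u‖ := norm_pos_iff.mpr hne0
        rw [he, if_neg hvu, norm_div, Complex.norm_real, Real.norm_eq_abs, abs_of_nonneg habs0.le,
          div_self (ne_of_gt habs0)]
    simp only [Metric.mem_ball, hp, Complex.dist_eq, add_sub_cancel_left, norm_mul,
      Complex.norm_real, Real.norm_eq_abs, he1, mul_one]
    rw [abs_of_nonneg (by linarith : (0:ℝ) ≤ s - ε)]
    linarith
  have := h hpmem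
  rw [Metric.mem_ball, Complex.dist_eq, hp] at this
  have heq : v + ((s - ε : ℝ) : ℂ) * e - u = (v - u) + ((s - ε : ℝ) : ℂ) * e := by ring
  rw [heq, habs] at this
  linarith

/-- Under the hypotheses of the disc lemma, if `w` is the point of `Π(V)`
with `h(w) = h(z)` closest in Euclidean distance to `z`, then `|z - w| < 3(r - s)`. -/
theorem stmt12 (u v : ℂ) (r s : ℝ) (hr : 0 < r) (hs : 0 < s)
    (hsub : Metric.ball v s ⊆ Metric.ball u r)
    (hne : Metric.ball v s ≠ Metric.ball u r)
    (z : H3) (hzt : 0 < z.t) (hzU : edistPt z u = r)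
    (hratio : r / s < min 2 (1 + (1 / 8) * sinhRhoPlane z v s))
    (w : H3) (hwV : edistPt w v = s) (hwt : w.t = z.t)
    (hclosest : ∀ w' : H3, edistPt w' v = s → w'.t = z.t → dist3 z w ≤ dist3 z w') :
    dist3 z w < 3 * (r - s) := by
  have ht0 : 0 < z.t := hzt
  set t := z.t with htdef
  set d := ‖z.p - v‖ with hd
  set a := ‖z.p - u‖ with ha
  set R := ‖w.p - v‖ with hR
  have hd0 : 0 ≤ d := norm_nonneg _
  have ha0 : 0 ≤ a := norm_nonneg _
  have hR0 : 0 ≤ R := norm_nonneg _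
  -- squared relations
  have hzU2 : a ^ 2 + t ^ 2 = r ^ 2 := by
    have h0 : (0:ℝ) ≤ a ^ 2 + t ^ 2 := by positivity
    have h1 := hzU
    simp only [edistPt, ← ha, ← htdef] at h1
    rw [← h1]
    exact (Real.sq_sqrt h0).symm
  have hwV2 : R ^ 2 + t ^ 2 = s ^ 2 := by
    have h1 := hwV
    simp only [edistPt, ← hR, hwt, ← htdef] at h1
    have h0 : (0:ℝ) ≤ R ^ 2 + t ^ 2 := by positivity
    rw [← h1]
    exact (Real.sq_sqrt h0).symm
  -- containment facts
  have hdist : dist v u + s ≤ r := ball_subset_dist u v r s hs hsub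
  have hsr : s < r := by
    have hle : s ≤ r := by have := dist_nonneg (x := v) (y := u); linarith
    rcases lt_or_eq_of_le hle with h | h
    · exact h
    · exfalso
      have h0 : (0:ℝ) ≤ dist v u := dist_nonneg
      have hvu : dist v u = 0 := by linarith
      have : v = u := by rwa [dist_eq_zero] at hvu
      exact hne (by rw [this, h])
  -- ratio facts
  have hsinh : sinhRhoPlane z v s = (d ^ 2 + t ^ 2 - s ^ 2) / (2 * t * s) := by
    simp only [sinhRhoPlane, edistPt, ← hd, ← htdef]
    rw [Real.sq_sqrt (by positivity)]
  rw [hsinh] at hratio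
  obtain ⟨h2, hsg⟩ := lt_min_iff.mp hratio
  have hr2s : r < 2 * s := by rw [div_lt_iff₀ hs] at h2; linarith
  have key : (r - s) * (16 * t) < d ^ 2 + t ^ 2 - s ^ 2 := by
    rw [div_lt_iff₀ hs] at hsg
    have heq : (1 + 1 / 8 * ((d ^ 2 + t ^ 2 - s ^ 2) / (2 * t * s))) * s
        = s + (d ^ 2 + t ^ 2 - s ^ 2) / (16 * t) := by
      field_simp
      ring
    rw [heq] at hsg
    have key' : r - s < (d ^ 2 + t ^ 2 - s ^ 2) / (16 * t) := by linarith
    rwa [lt_div_iff₀ (by positivity : (0:ℝ) < 16 * t)] at key'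
  -- d > R
  have hdR : R < d := by
    have hsq : R ^ 2 < d ^ 2 := by nlinarith
    exact lt_of_pow_lt_pow_left₀ 2 hd0 hsq
  have hdpos : 0 < d := lt_of_le_of_lt hR0 hdR
  -- construct the comparison point w'
  set w' : H3 := ⟨v + ((R / d : ℝ) : ℂ) * (z.p - v), z.t⟩ with hw'
  have hw'V : edistPt w' v = s := by
    simp only [edistPt, hw']
    have hvv : v + ((R / d : ℝ) : ℂ) * (z.p - v) - v = ((R / d : ℝ) : ℂ) * (z.p - v) := by
      ring
    rw [hvv, norm_mul, Complex.norm_real, Real.norm_eq_abs, abs_of_nonneg (div_nonneg hR0 hd0), ← hd]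
    have : R / d * d = R := div_mul_cancel₀ R (ne_of_gt hdpos)
    rw [this, ← htdef, hwV2, Real.sqrt_sq hs.le]
  have hdzw' : dist3 z w' = d - R := by
    simp only [dist3, hw']
    have hzp : z.p - (v + ((R / d : ℝ) : ℂ) * (z.p - v)) = ((1 - R / d : ℝ) : ℂ) * (z.p - v) := by
      push_cast
      ring
    rw [hzp, norm_mul, Complex.norm_real, Real.norm_eq_abs, ← hd]
    have h1 : (0:ℝ) ≤ 1 - R / d := by
      rw [sub_nonneg, div_le_one hdpos]
      exact hdR.le
    rw [abs_of_nonneg h1, ← htdef, sub_self]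
    have : (1 - R / d) * d = d - R := by field_simp
    rw [this]
    have : (0:ℝ) ^ 2 = 0 := by norm_num
    rw [this, add_zero, Real.sqrt_sq (by linarith : (0:ℝ) ≤ d - R)]
  have hle : dist3 z w ≤ d - R := hdzw' ▸ hclosest w' hw'V rfl
  -- triangle inequality
  have htri : d ≤ a + (r - s) := by
    have h1 : d ≤ a + ‖u - v‖ := norm_sub_le_norm_sub_add_norm_sub z.p u v
    have h2 : ‖u - v‖ = dist v u := by
      rw [Complex.dist_eq, norm_sub_rev]
    linarith
  -- clean up the context for the final arithmetic
  clear hclosest hsub hne hratio hzU hwV hzt hwt hw'V hdzw' hsinh hw'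
  clear w' hd ha hR htdef hdist h2 hsg
  clear_value t d a R
  generalize dist3 z w = DW at hle ⊢
  clear z w u v
  -- final case split
  by_cases hc : (r + s) / 2 < a + R
  · have haR : 0 < a + R := by linarith
    have hkey2 : a - R < 2 * (r - s) := by
      nlinarith [mul_pos (sub_pos.mpr hsr) haR]
    linarith
  · exfalso
    push_neg at hc
    have haR2 : R ≤ a := by
      have hs2 : s ^ 2 ≤ r ^ 2 := by nlinarith
      have hsq : R ^ 2 ≤ a ^ 2 := by linarith
      exact le_of_pow_le_pow_left₀ two_ne_zero ha0 hsq
    have htb : 16 * t < 2 * (r + s) + (r - s) := by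
      nlinarith [mul_self_le_mul_self hd0 htri,
        mul_le_mul_of_nonneg_right hc (by linarith : (0:ℝ) ≤ r - s),
        sub_pos.mpr hsr]
    have htlt : t < 7 * s / 16 := by linarith
    have hRlt : R < 3 * s / 4 := by linarith
    nlinarith [mul_self_lt_mul_self hR0 hRlt, mul_self_lt_mul_self ht0.le htlt]
end

section
/- Let f(z) = a/(b+z) be a Möbius transformation with a ≠ 0. Then f(𝔻) is contained in 𝔻 and internally tangent to the unit circle if and only if |b| = 1 + |a|. -/
open Complex Metric

private lemma normSq_key (b z : ℂ) :
    Complex.normSq (b + z) - Complex.normSq (1 + (starRingEnd ℂ) b * z)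
      = (Complex.normSq b - 1) * (1 - Complex.normSq z) := by
  simp only [Complex.normSq_apply, Complex.add_re, Complex.add_im, Complex.mul_re,
    Complex.mul_im, Complex.one_re, Complex.one_im, Complex.conj_re, Complex.conj_im]
  ring

private lemma abs_lt_abs_iff (b z : ℂ) (hb : 1 < ‖b‖) :
    ‖1 + (starRingEnd ℂ) b * z‖ < ‖b + z‖ ↔ ‖z‖ < 1 := by
  have e := normSq_key b z
  have h1 : 1 < Complex.normSq b := by
    have := Complex.sq_norm b; nlinarith
  have eX := Complex.sq_norm (1 + (starRingEnd ℂ) b * z)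
  have eB := Complex.sq_norm (b + z)
  have eZ := Complex.sq_norm z
  have nX := norm_nonneg (1 + (starRingEnd ℂ) b * z)
  have nB := norm_nonneg (b + z)
  have nZ := norm_nonneg z
  constructor
  · intro h
    by_contra hc
    push_neg at hc
    have h2 : ‖1 + (starRingEnd ℂ) b * z‖ ^ 2 < ‖b + z‖ ^ 2 :=
      pow_lt_pow_left₀ h nX two_ne_zero
    have hz2 : 1 ≤ Complex.normSq z := by nlinarith
    nlinarith [mul_nonneg (by linarith : (0:ℝ) ≤ Complex.normSq b - 1)
      (by linarith : (0:ℝ) ≤ Complex.normSq z - 1)]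
  · intro h
    have h2 : ‖z‖ ^ 2 < 1 := by nlinarith
    have h3 : ‖1 + (starRingEnd ℂ) b * z‖ ^ 2 < ‖b + z‖ ^ 2 := by
      nlinarith
    nlinarith

private lemma hSc (b : ℂ) :
    ((‖b‖ ^ 2 - 1 : ℝ) : ℂ) = b * (starRingEnd ℂ) b - 1 := by
  rw [Complex.mul_conj]
  push_cast [← Complex.sq_norm]
  ring

private lemma fz_sub_c (a b z : ℂ) (hb : 1 < ‖b‖) (hz : b + z ≠ 0) :
    a / (b + z) - a * (starRingEnd ℂ) b / ((‖b‖ ^ 2 - 1 : ℝ) : ℂ)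
      = -(a * (1 + (starRingEnd ℂ) b * z)) / ((b + z) * ((‖b‖ ^ 2 - 1 : ℝ) : ℂ)) := by
  have hS0 : ((‖b‖ ^ 2 - 1 : ℝ) : ℂ) ≠ 0 := by
    simp only [ne_eq, Complex.ofReal_eq_zero]
    nlinarith
  rw [hSc b] at hS0 ⊢
  field_simp
  ring

private lemma mem_ball_iff (a b z : ℂ) (ha : a ≠ 0) (hb : 1 < ‖b‖) (hz : b + z ≠ 0) :
    a / (b + z) ∈ Metric.ball (a * (starRingEnd ℂ) b / ((‖b‖ ^ 2 - 1 : ℝ) : ℂ))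
      (‖a‖ / (‖b‖ ^ 2 - 1)) ↔ ‖z‖ < 1 := by
  have hSpos : (0:ℝ) < ‖b‖ ^ 2 - 1 := by nlinarith [norm_nonneg b]
  have hApos : 0 < ‖a‖ := norm_pos_iff.mpr ha
  have hBpos : 0 < ‖b + z‖ := norm_pos_iff.mpr hz
  rw [Metric.mem_ball, Complex.dist_eq, fz_sub_c a b z hb hz]
  rw [norm_div, norm_neg, norm_mul, norm_mul, Complex.norm_real, Real.norm_eq_abs,
    abs_of_pos hSpos]
  rw [div_lt_div_iff₀ (by positivity) hSpos]
  rw [← abs_lt_abs_iff b z hb]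
  constructor
  · intro h
    by_contra hc
    push_neg at hc
    nlinarith [mul_nonneg (mul_pos hApos hSpos).le (sub_nonneg.2 hc)]
  · intro h
    nlinarith [mul_pos (mul_pos hApos hSpos) (sub_pos.2 h)]

private lemma image_eq (a b : ℂ) (ha : a ≠ 0) (hb : 1 < ‖b‖) :
    (fun z : ℂ => a / (b + z)) '' Metric.ball 0 1 =
      Metric.ball (a * (starRingEnd ℂ) b / ((‖b‖ ^ 2 - 1 : ℝ) : ℂ))
        (‖a‖ / (‖b‖ ^ 2 - 1)) := by
  have hSpos : (0:ℝ) < ‖b‖ ^ 2 - 1 := by nlinarith [norm_nonneg b]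
  ext w
  constructor
  · rintro ⟨z, hz1, rfl⟩
    rw [Metric.mem_ball, dist_zero_right] at hz1
    have hz : b + z ≠ 0 := by
      intro h
      have hbz : ‖b‖ = ‖z‖ := by
        rw [show b = -z from eq_neg_of_add_eq_zero_left h, norm_neg]
      linarith
    exact (mem_ball_iff a b z ha hb hz).2 hz1
  · intro hw
    have hw0 : w ≠ 0 := by
      intro h
      rw [h, Metric.mem_ball, dist_zero_left, norm_div, norm_mul,
        Complex.norm_conj, Complex.norm_real, Real.norm_eq_abs, abs_of_pos hSpos] at hw
      rw [div_lt_div_iff₀ hSpos hSpos] at hw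
      nlinarith [mul_pos (mul_pos (norm_pos_iff.mpr ha) hSpos) (sub_pos.2 hb)]
    have hbz : b + (a / w - b) = a / w := by ring
    have hfz : a / (b + (a / w - b)) = w := by
      rw [hbz]; field_simp
    refine ⟨a / w - b, ?_, hfz⟩
    rw [Metric.mem_ball, dist_zero_right]
    have hz : b + (a / w - b) ≠ 0 := by
      rw [hbz]; exact div_ne_zero ha hw0
    refine (mem_ball_iff a b (a / w - b) ha hb hz).1 ?_
    rw [hfz]
    exact hw

private lemma unique_tangent (c : ℂ) (r : ℝ) (hr : 0 < r) (hr1 : r < 1)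
    (hc : ‖c‖ = 1 - r) :
    ∃! p : ℂ, p ∈ Metric.sphere c r ∧ p ∈ Metric.sphere (0:ℂ) 1 := by
  have hC : (0:ℝ) < 1 - r := by linarith
  have hC0 : ((1 - r : ℝ) : ℂ) ≠ 0 := by
    simp only [ne_eq, Complex.ofReal_eq_zero]; linarith
  have hC0' : (1 - (r:ℂ)) ≠ 0 := by push_cast at hC0; exact hC0
  refine ⟨c / ((1 - r : ℝ) : ℂ), ⟨?_, ?_⟩, ?_⟩
  · rw [Metric.mem_sphere, Complex.dist_eq]
    have e : c / ((1 - r : ℝ) : ℂ) - c = ((r / (1 - r) : ℝ) : ℂ) * c := by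
      push_cast
      field_simp
      ring
    rw [e, norm_mul, Complex.norm_real, Real.norm_eq_abs, hc, _root_.abs_of_nonneg (div_nonneg hr.le hC.le)]
    field_simp
  · rw [Metric.mem_sphere, Complex.dist_eq, sub_zero, norm_div, Complex.norm_real, Real.norm_eq_abs, hc,
      abs_of_pos hC, div_self (by linarith)]
  · rintro q ⟨h1, h2⟩
    rw [Metric.mem_sphere, Complex.dist_eq] at h1
    rw [Metric.mem_sphere, Complex.dist_eq, sub_zero] at h2
    have e1 : Complex.normSq (q - c) = r ^ 2 := by
      rw [← Complex.sq_norm, h1]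
    have e2 : Complex.normSq q = 1 := by
      rw [← Complex.sq_norm, h2]; norm_num
    have e3 : Complex.normSq c = (1 - r) ^ 2 := by
      rw [← Complex.sq_norm, hc]
    have key : ((1 - r : ℝ) : ℂ) * q - c = 0 := by
      rw [← Complex.normSq_eq_zero]
      simp only [Complex.normSq_apply, Complex.sub_re, Complex.sub_im, Complex.add_re,
        Complex.add_im, Complex.mul_re, Complex.mul_im, Complex.ofReal_re, Complex.ofReal_im,
        Complex.one_re, Complex.one_im] at e1 e2 e3 ⊢
      nlinarith [sq_nonneg ((1 - r) * q.re - c.re), sq_nonneg ((1 - r) * q.im - c.im)]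
    have h : ((1 - r : ℝ) : ℂ) * q = c := by linear_combination key
    rw [eq_div_iff hC0, mul_comm]
    exact h

private lemma no_tangent (c : ℂ) (r : ℝ) (hr : 0 < r) (h : ‖c‖ + r < 1) :
    ¬ ∃! p : ℂ, p ∈ frontier (Metric.ball c r) ∧ p ∈ Metric.sphere (0:ℂ) 1 := by
  rintro ⟨p, ⟨hpf, hps⟩, -⟩
  rw [frontier_ball _ hr.ne'] at hpf
  rw [Metric.mem_sphere, Complex.dist_eq] at hpf
  rw [Metric.mem_sphere, Complex.dist_eq, sub_zero] at hps
  have tri := norm_sub_le_norm_sub_add_norm_sub p c 0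
  rw [sub_zero, sub_zero, hpf, hps] at tri
  linarith

private lemma unique_tangent' (c : ℂ) (r : ℝ) (hr : 0 < r) (hr1 : r < 1)
    (hc : ‖c‖ = 1 - r) :
    ∃! p : ℂ, p ∈ frontier (Metric.ball c r) ∧ p ∈ Metric.sphere (0:ℂ) 1 := by
  simp only [frontier_ball _ hr.ne']
  exact unique_tangent c r hr hr1 hc

private lemma contained (c : ℂ) (r : ℝ) (hc : ‖c‖ = 1 - r) :
    Metric.ball c r ⊆ Metric.ball (0:ℂ) 1 := by
  intro w hw
  rw [Metric.mem_ball, Complex.dist_eq] at hw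
  rw [Metric.mem_ball, dist_zero_right]
  have tri := norm_sub_le_norm_sub_add_norm_sub w c 0
  rw [sub_zero, sub_zero, hc] at tri
  linarith

/-- For the Möbius transformation `f(z) = a/(b+z)` with `a ≠ 0`, the disc
`f(𝔻)` is contained in `𝔻` and internally tangent to the unit circle (the boundary
circles share exactly one point) if and only if `|b| = 1 + |a|`. -/
theorem stmt17 (a b : ℂ) (ha : a ≠ 0) :
    (((fun z : ℂ => a / (b + z)) '' Metric.ball 0 1 ⊆ Metric.ball 0 1) ∧
      (∃! p : ℂ, p ∈ frontier ((fun z : ℂ => a / (b + z)) '' Metric.ball 0 1) ∧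
        p ∈ Metric.sphere (0 : ℂ) 1)) ↔
    ‖b‖ = 1 + ‖a‖ := by
  have hApos : 0 < ‖a‖ := norm_pos_iff.mpr ha
  constructor
  · rintro ⟨hsub, hex⟩
    have haux : ∀ w : ℂ, w ≠ 0 → ‖w - b‖ < 1 → ‖a‖ < ‖w‖ := by
      intro w hw0 hwb
      have hm : a / w ∈ Metric.ball (0:ℂ) 1 := by
        apply hsub
        refine ⟨w - b, ?_, ?_⟩
        · rw [Metric.mem_ball, dist_zero_right]; exact hwb
        · show a / (b + (w - b)) = a / w
          rw [show b + (w - b) = w from by ring]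
      rw [Metric.mem_ball, dist_zero_right, norm_div,
        div_lt_one (norm_pos_iff.mpr hw0)] at hm
      exact hm
    have hge : 1 + ‖a‖ ≤ ‖b‖ := by
      by_contra hcon
      push_neg at hcon
      rcases eq_or_ne b 0 with hb0 | hb0
      · set δ := min (‖a‖) (1/2) with hδdef
        have hδ : 0 < δ := lt_min hApos one_half_pos
        have h1 : ‖((δ:ℝ):ℂ) - b‖ < 1 := by
          rw [hb0, sub_zero, Complex.norm_real, Real.norm_eq_abs, abs_of_pos hδ]
          have := min_le_right (‖a‖) (1/2 : ℝ)
          linarith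
        have h2 := haux ((δ:ℝ):ℂ) (Complex.ofReal_ne_zero.2 hδ.ne') h1
        rw [Complex.norm_real, Real.norm_eq_abs, abs_of_pos hδ] at h2
        have := min_le_left (‖a‖) (1/2 : ℝ)
        linarith
      · set δ := min (‖a‖) (‖b‖ + 1/2) with hδdef
        have hbpos : 0 < ‖b‖ := norm_pos_iff.mpr hb0
        have hδ : 0 < δ := lt_min hApos (by linarith)
        set w : ℂ := ((δ / ‖b‖ : ℝ) : ℂ) * b with hwdef
        have hw0 : w ≠ 0 :=
          mul_ne_zero (Complex.ofReal_ne_zero.2 (div_pos hδ hbpos).ne') hb0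
        have habsw : ‖w‖ = δ := by
          rw [hwdef, norm_mul, Complex.norm_real, Real.norm_eq_abs, _root_.abs_of_pos (div_pos hδ hbpos)]
          field_simp
        have hwb : ‖w - b‖ < 1 := by
          have e : w - b = ((δ / ‖b‖ - 1 : ℝ) : ℂ) * b := by
            rw [hwdef]; push_cast; ring
          rw [e, norm_mul, Complex.norm_real, Real.norm_eq_abs]
          have e2 : |δ / ‖b‖ - 1| * ‖b‖ = |δ - ‖b‖| := by
            rw [← _root_.abs_of_pos hbpos, ← abs_mul]
            rw [_root_.abs_of_pos hbpos]
            congr 1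
            field_simp
          rw [e2, abs_sub_lt_iff]
          constructor
          · have := min_le_right (‖a‖) (‖b‖ + 1/2)
            linarith
          · have h1 : ‖b‖ - 1 < ‖a‖ := by linarith
            have h2 : ‖b‖ - 1 < δ := lt_min h1 (by linarith)
            linarith
        have h3 := haux w hw0 hwb
        rw [habsw] at h3
        have := min_le_left (‖a‖) (‖b‖ + 1/2)
        linarith
    have hb1 : 1 < ‖b‖ := by linarith
    have hSpos : (0:ℝ) < ‖b‖ ^ 2 - 1 := by nlinarith [norm_nonneg b]
    have habsc : ‖a * (starRingEnd ℂ) b / ((‖b‖ ^ 2 - 1 : ℝ) : ℂ)‖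
        = ‖a‖ * ‖b‖ / (‖b‖ ^ 2 - 1) := by
      rw [norm_div, norm_mul, Complex.norm_conj, Complex.norm_real, Real.norm_eq_abs, _root_.abs_of_pos hSpos]
    rcases eq_or_lt_of_le hge with heq | hlt
    · exact heq.symm
    · exfalso
      rw [image_eq a b ha hb1] at hex
      refine no_tangent _ _ (div_pos hApos hSpos) ?_ hex
      rw [habsc, ← add_div, div_lt_one hSpos]
      nlinarith
  · intro hab
    have hb1 : 1 < ‖b‖ := by linarith
    have hSpos : (0:ℝ) < ‖b‖ ^ 2 - 1 := by nlinarith [norm_nonneg b]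
    have hrpos : 0 < ‖a‖ / (‖b‖ ^ 2 - 1) := div_pos hApos hSpos
    have hr1 : ‖a‖ / (‖b‖ ^ 2 - 1) < 1 := by
      rw [div_lt_one hSpos]
      nlinarith
    have habsc : ‖a * (starRingEnd ℂ) b / ((‖b‖ ^ 2 - 1 : ℝ) : ℂ)‖
        = ‖a‖ * ‖b‖ / (‖b‖ ^ 2 - 1) := by
      rw [norm_div, norm_mul, Complex.norm_conj, Complex.norm_real, Real.norm_eq_abs, _root_.abs_of_pos hSpos]
    have hc1 : ‖a * (starRingEnd ℂ) b / ((‖b‖ ^ 2 - 1 : ℝ) : ℂ)‖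
        = 1 - ‖a‖ / (‖b‖ ^ 2 - 1) := by
      rw [habsc]
      field_simp
      nlinarith
    rw [image_eq a b ha hb1]
    exact ⟨contained _ _ hc1, unique_tangent' _ _ hrpos hr1 hc1⟩
end
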